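/- Under the same setup as the linear-growth estimate, with f and g as above, there exists M depending only on L, |∇U(0)|, ‖k‖_{C²_b}, ε^{-1} such that for all θ ∈ S^{d-1}, p, q ∈ ℝ, and probability measures μ, ν on ℝ^d with finite second moments: |f(θ,p,μ)/g(θ,p,μ) − f(θ,q,ν)/g(θ,q,ν)| ≤ M(1 + m₂(μ)^{1/2}) (|p − q| + W₂(μ, ν)). -/

import Mathlib

open MeasureTheory Metric Real
open scoped ENNReal NNReal
noncomputable section

abbrev E (d : ℕ) := EuclideanSpace ℝ (Fin d)

/-- A coupling of two measures on `ℝ^d`. -/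
def IsCoupling {d : ℕ} (γ : Measure (E d × E d)) (μ ν : Measure (E d)) : Prop :=
  γ.map Prod.fst = μ ∧ γ.map Prod.snd = ν

/-- The 2-Wasserstein distance on measures on `ℝ^d`. -/
def W2 {d : ℕ} (μ ν : Measure (E d)) : ℝ :=
  Real.sqrt (sInf { r : ℝ | ∃ γ : Measure (E d × E d), IsCoupling γ μ ν ∧
    r = ∫ q, ‖q.1 - q.2‖ ^ 2 ∂γ })

/-- Second moment `m₂(μ) = ∫ |x|² dμ`. -/
def m2 {d : ℕ} (μ : Measure (E d)) : ℝ := ∫ x, ‖x‖ ^ 2 ∂μ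

/-- The numerator `f(θ,p,μ)` of the kernel-density Radon–Wasserstein velocity. -/
def fRW {d : ℕ} (k kd : ℝ → ℝ) (gU : E d → E d) (θ : sphere (0 : E d) 1) (p : ℝ)
    (μ : Measure (E d)) : ℝ :=
  ∫ x, (kd (p - (inner ℝ x (θ : E d) : ℝ)) +
    k (p - (inner ℝ x (θ : E d) : ℝ)) * (inner ℝ (θ : E d) (gU x) : ℝ)) ∂μ

/-- The denominator `g(θ,p,μ)` of the kernel-density Radon–Wasserstein velocity. -/
def gRW {d : ℕ} (k : ℝ → ℝ) (ε : ℝ) (θ : sphere (0 : E d) 1) (p : ℝ)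
    (μ : Measure (E d)) : ℝ :=
  (∫ x, k (p - (inner ℝ x (θ : E d) : ℝ)) ∂μ) + ε

/-!
Write `f/g - f'/g' = (f - f')/g' + f (g' - g)/(g g')` and use `g, g' ≥ ε`. For a coupling `γ` of
`μ` and `ν` both differences are `γ`-integrals of differences of integrands. Since `k` and `k'` are
Lipschitz and `∇U` grows at most linearly, the `f`-integrand changes by at most
`C (1 + |x|) (|p - q| + |x - y|)` between `(p, x)` and `(q, y)`, and Cauchy–Schwarz bounds the
`γ`-integral of this by `C (1 + m₂(μ)^{1/2}) (|p - q| + (∫ |x - y|² dγ)^{1/2})`. The estimate holds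
for every coupling, hence with `W₂(μ, ν)`.
-/

lemma abs_div_sub_div_le {F F' G G' ε : ℝ} (hε : 0 < ε) (hG : ε ≤ G) (hG' : ε ≤ G') :
    |F / G - F' / G'| ≤ |F - F'| / ε + |F| * |G - G'| / ε ^ 2 := by
  have hG0 : 0 < G := hε.trans_le hG
  have hG'0 : 0 < G' := hε.trans_le hG'
  have hsplit : F / G - F' / G' = (F - F') / G' + F * (G' - G) / (G * G') := by
    field_simp; ring
  calc |F / G - F' / G'| ≤ |(F - F') / G'| + |F * (G' - G) / (G * G')| :=
        hsplit ▸ abs_add_le _ _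
    _ = |F - F'| / G' + |F| * |G - G'| / (G * G') := by
        rw [abs_div, abs_div, abs_mul, abs_sub_comm G', abs_of_pos hG'0,
          abs_of_pos (mul_pos hG0 hG'0)]
    _ ≤ |F - F'| / ε + |F| * |G - G'| / ε ^ 2 := by
        gcongr
        rw [sq]
        exact mul_le_mul hG hG' hε.le hG0.le

section SquareIntegrable

variable {α : Type*} [MeasurableSpace α] {γ : Measure α}

lemma integral_mul_le_sqrt_mul_sqrt {F G : α → ℝ} (hF0 : ∀ x, 0 ≤ F x) (hG0 : ∀ x, 0 ≤ G x)
    (hF : MemLp F 2 γ) (hG : MemLp G 2 γ) :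
    ∫ x, F x * G x ∂γ ≤ √(∫ x, F x ^ 2 ∂γ) * √(∫ x, G x ^ 2 ∂γ) := by
  have h := integral_mul_le_Lp_mul_Lq_of_nonneg Real.HolderConjugate.two_two
    (.of_forall hF0) (.of_forall hG0) (by simpa using hF) (by simpa using hG)
  simpa [Real.sqrt_eq_rpow] using h

lemma integral_le_sqrt_integral_sq [IsProbabilityMeasure γ] {F : α → ℝ} (hF0 : ∀ x, 0 ≤ F x)
    (hF : MemLp F 2 γ) : ∫ x, F x ∂γ ≤ √(∫ x, F x ^ 2 ∂γ) := by
  simpa using integral_mul_le_sqrt_mul_sqrt hF0 (fun _ => zero_le_one) hF (memLp_const 1)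

lemma integral_const_add_le [IsProbabilityMeasure γ] {ψ : α → ℝ} (a : ℝ) (hψ0 : ∀ x, 0 ≤ ψ x)
    (hψ : MemLp ψ 2 γ) : ∫ x, (a + ψ x) ∂γ ≤ a + √(∫ x, ψ x ^ 2 ∂γ) := by
  rw [integral_add (integrable_const a) (hψ.integrable one_le_two), integral_const, probReal_univ,
    one_smul]
  exact add_le_add_right (integral_le_sqrt_integral_sq hψ0 hψ) a

lemma integral_one_add_mul_const_add_le [IsProbabilityMeasure γ] {φ ψ : α → ℝ} {a : ℝ}
    (ha : 0 ≤ a) (hφ0 : ∀ x, 0 ≤ φ x) (hψ0 : ∀ x, 0 ≤ ψ x) (hφ : MemLp φ 2 γ)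
    (hψ : MemLp ψ 2 γ) :
    ∫ x, (1 + φ x) * (a + ψ x) ∂γ ≤ (1 + √(∫ x, φ x ^ 2 ∂γ)) * (a + √(∫ x, ψ x ^ 2 ∂γ)) := by
  have hφ1 := hφ.integrable one_le_two
  have hψ1 := hψ.integrable one_le_two
  have hφψ : Integrable (fun x => φ x * ψ x) γ := hφ.integrable_mul hψ
  have hexpand : ∫ x, (1 + φ x) * (a + ψ x) ∂γ
      = a + ∫ x, ψ x ∂γ + a * ∫ x, φ x ∂γ + ∫ x, φ x * ψ x ∂γ := by
    simp_rw [add_mul, one_mul, mul_add]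
    have h1 : Integrable (fun x => a + ψ x) γ := (integrable_const a).add hψ1
    have h2 : Integrable (fun x => φ x * a + φ x * ψ x) γ := (hφ1.mul_const a).add hφψ
    rw [integral_add h1 h2, integral_add (integrable_const a) hψ1,
      integral_add (hφ1.mul_const a) hφψ,
      integral_mul_const, integral_const, probReal_univ, one_smul]
    ring
  have hφ' := integral_le_sqrt_integral_sq hφ0 hφ
  have hψ' := integral_le_sqrt_integral_sq hψ0 hψ
  have hCS := integral_mul_le_sqrt_mul_sqrt hφ0 hψ0 hφ hψ
  rw [hexpand]
  nlinarith [Real.sqrt_nonneg (∫ x, φ x ^ 2 ∂γ)]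

end SquareIntegrable

section Coupling

variable {α β : Type*} [MeasurableSpace α] [MeasurableSpace β] {γ : Measure (α × β)}
  {μ : Measure α} {ν : Measure β}

lemma integral_comp_fst_of_map_fst (h : γ.map Prod.fst = μ) {F : α → ℝ}
    (hF : AEStronglyMeasurable F μ) : ∫ x, F x.1 ∂γ = ∫ x, F x ∂μ := by
  subst h
  exact (integral_map measurable_fst.aemeasurable hF).symm

lemma memLp_comp_fst_of_map_fst {G : Type*} [NormedAddCommGroup G] {p : ℝ≥0∞}
    (h : γ.map Prod.fst = μ) {F : α → G} (hF : MemLp F p μ) : MemLp (fun x => F x.1) p γ := by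
  subst h
  exact hF.comp_of_map measurable_fst.aemeasurable

lemma memLp_comp_snd_of_map_snd {G : Type*} [NormedAddCommGroup G] {p : ℝ≥0∞}
    (h : γ.map Prod.snd = ν) {F : β → G} (hF : MemLp F p ν) : MemLp (fun x => F x.2) p γ := by
  subst h
  exact hF.comp_of_map measurable_snd.aemeasurable

lemma abs_integral_sub_integral_le_of_map (h₁ : γ.map Prod.fst = μ) (h₂ : γ.map Prod.snd = ν)
    {F : α → ℝ} {G : β → ℝ} {B : α × β → ℝ} (hF : Integrable F μ) (hG : Integrable G ν)
    (hB : Integrable B γ) (hFG : ∀ x y, |F x - G y| ≤ B (x, y)) :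
    |∫ x, F x ∂μ - ∫ y, G y ∂ν| ≤ ∫ z, B z ∂γ := by
  subst h₁ h₂
  have hF' : Integrable (fun z => F z.1) γ :=
    (integrable_map_measure hF.1 measurable_fst.aemeasurable).mp hF
  have hG' : Integrable (fun z => G z.2) γ :=
    (integrable_map_measure hG.1 measurable_snd.aemeasurable).mp hG
  rw [integral_map measurable_fst.aemeasurable hF.1, integral_map measurable_snd.aemeasurable hG.1,
    ← integral_sub hF' hG']
  exact norm_integral_le_of_norm_le (f := fun z => F z.1 - G z.2) hB
    (.of_forall fun z => hFG z.1 z.2)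

end Coupling

lemma abs_sub_le_mul_abs_sub_of_hasDerivAt {f f' : ℝ → ℝ} {C : ℝ}
    (hf : ∀ x, HasDerivAt f (f' x) x) (hC : ∀ x, |f' x| ≤ C) (a b : ℝ) :
    |f a - f b| ≤ C * |a - b| := by
  simpa [Real.norm_eq_abs] using Convex.norm_image_sub_le_of_norm_hasDerivWithin_le
    (fun x _ => (hf x).hasDerivWithinAt) (fun x _ => by simpa using hC x) convex_univ
    (Set.mem_univ b) (Set.mem_univ a)

lemma LipschitzWith.norm_le_norm_apply_zero_add {F G : Type*} [SeminormedAddCommGroup F]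
    [SeminormedAddCommGroup G] {K : ℝ≥0} {f : F → G} (hf : LipschitzWith K f) (x : F) :
    ‖f x‖ ≤ ‖f 0‖ + K * ‖x‖ := by
  have h := hf.dist_le_mul x 0
  rw [dist_eq_norm, dist_eq_norm, sub_zero] at h
  linarith [norm_sub_norm_le (f x) (f 0)]

lemma IsCoupling.isProbabilityMeasure {d : ℕ} {γ : Measure (E d × E d)} {μ ν : Measure (E d)}
    [IsProbabilityMeasure μ] (hγ : IsCoupling γ μ ν) : IsProbabilityMeasure γ := by
  have : IsProbabilityMeasure (γ.map Prod.fst) := hγ.1 ▸ inferInstance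
  exact Measure.isProbabilityMeasure_of_map Prod.fst

lemma isCoupling_prod {d : ℕ} (μ ν : Measure (E d)) [IsProbabilityMeasure μ]
    [IsProbabilityMeasure ν] : IsCoupling (μ.prod ν) μ ν :=
  ⟨by simp, by simp⟩

lemma le_W2_of_forall_coupling {d : ℕ} {μ ν : Measure (E d)} [IsProbabilityMeasure μ]
    [IsProbabilityMeasure ν] {t : ℝ}
    (h : ∀ γ, IsCoupling γ μ ν → t ≤ √(∫ z, ‖z.1 - z.2‖ ^ 2 ∂γ)) : t ≤ W2 μ ν := by
  rcases le_or_gt t 0 with ht | ht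
  · exact ht.trans (Real.sqrt_nonneg _)
  rw [W2, Real.le_sqrt' ht]
  refine le_csInf ⟨_, μ.prod ν, isCoupling_prod μ ν, rfl⟩ ?_
  rintro _ ⟨γ, hγ, rfl⟩
  have hcost : 0 ≤ ∫ z, ‖z.1 - z.2‖ ^ 2 ∂γ := integral_nonneg fun _ => by positivity
  simpa [Real.sq_sqrt hcost] using pow_le_pow_left₀ ht.le (h γ hγ) 2

lemma le_mul_add_W2_of_forall_coupling {d : ℕ} {μ ν : Measure (E d)} [IsProbabilityMeasure μ]
    [IsProbabilityMeasure ν] {T c b : ℝ} (hc : 0 < c)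
    (h : ∀ γ, IsCoupling γ μ ν → T ≤ c * (b + √(∫ z, ‖z.1 - z.2‖ ^ 2 ∂γ))) :
    T ≤ c * (b + W2 μ ν) := by
  have hW2 : T / c - b ≤ W2 μ ν := le_W2_of_forall_coupling fun γ hγ => by
    rw [sub_le_iff_le_add', div_le_iff₀' hc]
    exact h γ hγ
  rwa [sub_le_iff_le_add', div_le_iff₀' hc] at hW2

section Velocity

variable {d : ℕ} (θ : sphere (0 : E d) 1)

lemma abs_inner_sphere_le (v : E d) : |(inner ℝ (θ : E d) v : ℝ)| ≤ ‖v‖ := by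
  simpa using abs_real_inner_le_norm (θ : E d) v

lemma abs_comp_sub_inner_sub_le {f f' : ℝ → ℝ} {C : ℝ} (hf : ∀ x, HasDerivAt f (f' x) x)
    (hC : ∀ x, |f' x| ≤ C) (p q : ℝ) (x y : E d) :
    |f (p - inner ℝ x (θ : E d)) - f (q - inner ℝ y (θ : E d))| ≤ C * (|p - q| + ‖x - y‖) := by
  have hC0 : 0 ≤ C := (abs_nonneg _).trans (hC 0)
  have harg : |(p - inner ℝ x (θ : E d)) - (q - inner ℝ y (θ : E d))| ≤ |p - q| + ‖x - y‖ :=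
    calc |(p - inner ℝ x (θ : E d)) - (q - inner ℝ y (θ : E d))|
        = |(p - q) - inner ℝ (θ : E d) (x - y)| := by
          rw [inner_sub_right, real_inner_comm x, real_inner_comm y]; ring_nf
      _ ≤ |p - q| + |(inner ℝ (θ : E d) (x - y) : ℝ)| := abs_sub _ _
      _ ≤ |p - q| + ‖x - y‖ := add_le_add_right (abs_inner_sphere_le θ _) _
  exact (abs_sub_le_mul_abs_sub_of_hasDerivAt hf hC _ _).trans
    (mul_le_mul_of_nonneg_left harg hC0)

def rwIntegrand (k kd : ℝ → ℝ) (gU : E d → E d) (p : ℝ) (x : E d) : ℝ :=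
  kd (p - inner ℝ x (θ : E d)) + k (p - inner ℝ x (θ : E d)) * inner ℝ (θ : E d) (gU x)

variable {k kd kdd : ℝ → ℝ} {Ck ε : ℝ} {gU : E d → E d} {L : ℝ≥0} {μ ν : Measure (E d)}

lemma continuous_rwIntegrand (hk : Continuous k) (hkd : Continuous kd) (hgU : Continuous gU)
    (p : ℝ) : Continuous (rwIntegrand θ k kd gU p) := by
  unfold rwIntegrand; fun_prop

lemma abs_rwIntegrand_le (hk : ∀ p, |k p| ≤ Ck) (hkd : ∀ p, |kd p| ≤ Ck)
    (hLip : LipschitzWith L gU) (p : ℝ) (x : E d) :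
    |rwIntegrand θ k kd gU p x| ≤ Ck * (1 + ‖gU 0‖ + L) * (1 + ‖x‖) := by
  have hCk : 0 ≤ Ck := (abs_nonneg _).trans (hk 0)
  have hu := (abs_inner_sphere_le θ (gU x)).trans (hLip.norm_le_norm_apply_zero_add x)
  calc |rwIntegrand θ k kd gU p x|
      ≤ |kd (p - inner ℝ x (θ : E d))| +
          |k (p - inner ℝ x (θ : E d))| * |(inner ℝ (θ : E d) (gU x) : ℝ)| :=
        (abs_add_le _ _).trans_eq (by rw [abs_mul])
    _ ≤ Ck + Ck * (‖gU 0‖ + L * ‖x‖) := add_le_add (hkd _) (mul_le_mul (hk _) hu (abs_nonneg _) hCk)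
    _ ≤ Ck * (1 + ‖gU 0‖ + L) * (1 + ‖x‖) := by
        have := mul_nonneg hCk
          (mul_nonneg (add_nonneg zero_le_one (norm_nonneg (gU 0))) (norm_nonneg x))
        nlinarith [mul_nonneg hCk L.coe_nonneg]

lemma abs_rwIntegrand_sub_le (hk' : ∀ p, HasDerivAt k (kd p) p)
    (hk'' : ∀ p, HasDerivAt kd (kdd p) p) (hk : ∀ p, |k p| ≤ Ck) (hkd : ∀ p, |kd p| ≤ Ck)
    (hkdd : ∀ p, |kdd p| ≤ Ck) (hLip : LipschitzWith L gU) (p q : ℝ) (x y : E d) :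
    |rwIntegrand θ k kd gU p x - rwIntegrand θ k kd gU q y| ≤
      Ck * (1 + ‖gU 0‖ + L) * ((1 + ‖x‖) * (|p - q| + ‖x - y‖)) := by
  have hCk : 0 ≤ Ck := (abs_nonneg _).trans (hk 0)
  set a := p - inner ℝ x (θ : E d)
  set b := q - inner ℝ y (θ : E d)
  set u : ℝ := inner ℝ (θ : E d) (gU x)
  set v : ℝ := inner ℝ (θ : E d) (gU y)
  set δ := |p - q| + ‖x - y‖
  have hδ : 0 ≤ δ := by positivity
  have hkd_ab : |kd a - kd b| ≤ Ck * δ := abs_comp_sub_inner_sub_le θ hk'' hkdd p q x y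
  have hk_ab : |k a - k b| ≤ Ck * δ := abs_comp_sub_inner_sub_le θ hk' hkd p q x y
  have hu : |u| ≤ ‖gU 0‖ + L * ‖x‖ :=
    (abs_inner_sphere_le θ (gU x)).trans (hLip.norm_le_norm_apply_zero_add x)
  have huv : |u - v| ≤ L * δ := by
    rw [← inner_sub_right]
    refine (abs_inner_sphere_le θ _).trans ((hLip.norm_sub_le x y).trans ?_)
    exact mul_le_mul_of_nonneg_left (le_add_of_nonneg_left (abs_nonneg _)) L.coe_nonneg
  have hsplit : rwIntegrand θ k kd gU p x - rwIntegrand θ k kd gU q y =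
      (kd a - kd b) + (k a - k b) * u + k b * (u - v) := by
    unfold rwIntegrand; ring
  calc |rwIntegrand θ k kd gU p x - rwIntegrand θ k kd gU q y|
      ≤ |kd a - kd b| + |k a - k b| * |u| + |k b| * |u - v| := by
        rw [hsplit, ← abs_mul, ← abs_mul]
        exact (abs_add_le _ _).trans (add_le_add_left (abs_add_le _ _) _)
    _ ≤ Ck * δ + Ck * δ * (‖gU 0‖ + L * ‖x‖) + Ck * (L * δ) := by
        gcongr
        · exact hk _
    _ ≤ Ck * (1 + ‖gU 0‖ + L) * ((1 + ‖x‖) * δ) := by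
        have := mul_nonneg (mul_nonneg hCk hδ)
          (mul_nonneg (add_nonneg zero_le_one (norm_nonneg (gU 0))) (norm_nonneg x))
        nlinarith

lemma fRW_eq_integral_rwIntegrand (p : ℝ) :
    fRW k kd gU θ p μ = ∫ x, rwIntegrand θ k kd gU p x ∂μ := rfl

lemma integrable_rwIntegrand [IsFiniteMeasure μ] (hμ : MemLp (fun x => x) 2 μ)
    (hk : ∀ p, |k p| ≤ Ck) (hkd : ∀ p, |kd p| ≤ Ck) (hkc : Continuous k) (hkdc : Continuous kd)
    (hLip : LipschitzWith L gU) (p : ℝ) : Integrable (rwIntegrand θ k kd gU p) μ :=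
  Integrable.mono' (((integrable_const 1).add (hμ.norm.integrable one_le_two)).const_mul _)
    (continuous_rwIntegrand θ hkc hkdc hLip.continuous p).aestronglyMeasurable
    (.of_forall fun x => abs_rwIntegrand_le θ hk hkd hLip p x)

lemma abs_fRW_le [IsProbabilityMeasure μ] (hμ : MemLp (fun x => x) 2 μ)
    (hk : ∀ p, |k p| ≤ Ck) (hkd : ∀ p, |kd p| ≤ Ck) (hLip : LipschitzWith L gU) (p : ℝ) :
    |fRW k kd gU θ p μ| ≤ Ck * (1 + ‖gU 0‖ + L) * (1 + √(m2 μ)) := by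
  have hK : 0 ≤ Ck * (1 + ‖gU 0‖ + L) := mul_nonneg ((abs_nonneg _).trans (hk 0)) (by positivity)
  calc |fRW k kd gU θ p μ| = ‖∫ x, rwIntegrand θ k kd gU p x ∂μ‖ := rfl
    _ ≤ ∫ x, Ck * (1 + ‖gU 0‖ + L) * (1 + ‖x‖) ∂μ :=
        norm_integral_le_of_norm_le
          (((integrable_const 1).add (hμ.norm.integrable one_le_two)).const_mul _)
          (.of_forall fun x => abs_rwIntegrand_le θ hk hkd hLip p x)
    _ ≤ Ck * (1 + ‖gU 0‖ + L) * (1 + √(m2 μ)) := by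
        rw [integral_const_mul]
        exact mul_le_mul_of_nonneg_left
          (integral_const_add_le 1 (fun _ => norm_nonneg _) hμ.norm) hK

lemma abs_fRW_sub_le {γ : Measure (E d × E d)} (hγ : IsCoupling γ μ ν) [IsProbabilityMeasure μ]
    [IsProbabilityMeasure ν] (hμ : MemLp (fun x => x) 2 μ) (hν : MemLp (fun x => x) 2 ν)
    (hk' : ∀ p, HasDerivAt k (kd p) p) (hk'' : ∀ p, HasDerivAt kd (kdd p) p)
    (hk : ∀ p, |k p| ≤ Ck) (hkd : ∀ p, |kd p| ≤ Ck) (hkdd : ∀ p, |kdd p| ≤ Ck)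
    (hLip : LipschitzWith L gU) (p q : ℝ) :
    |fRW k kd gU θ p μ - fRW k kd gU θ q ν| ≤
      Ck * (1 + ‖gU 0‖ + L) * ((1 + √(m2 μ)) * (|p - q| + √(∫ z, ‖z.1 - z.2‖ ^ 2 ∂γ))) := by
  have := hγ.isProbabilityMeasure
  have hK : 0 ≤ Ck * (1 + ‖gU 0‖ + L) := mul_nonneg ((abs_nonneg _).trans (hk 0)) (by positivity)
  have hkc : Continuous k := continuous_iff_continuousAt.2 fun x => (hk' x).continuousAt
  have hkdc : Continuous kd := continuous_iff_continuousAt.2 fun x => (hk'' x).continuousAt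
  have hfst : MemLp (fun z : E d × E d => z.1) 2 γ := memLp_comp_fst_of_map_fst hγ.1 hμ
  have hsnd : MemLp (fun z : E d × E d => z.2) 2 γ := memLp_comp_snd_of_map_snd hγ.2 hν
  have hm2 : ∫ z, ‖z.1‖ ^ 2 ∂γ = m2 μ :=
    integral_comp_fst_of_map_fst hγ.1 (continuous_norm.pow 2).aestronglyMeasurable
  have hB : Integrable (fun z : E d × E d =>
      Ck * (1 + ‖gU 0‖ + L) * ((1 + ‖z.1‖) * (|p - q| + ‖z.1 - z.2‖))) γ := by
    have h1 : MemLp (fun z : E d × E d => 1 + ‖z.1‖) 2 γ := (memLp_const (1:ℝ)).add hfst.norm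
    have h2 : MemLp (fun z : E d × E d => |p - q| + ‖z.1 - z.2‖) 2 γ :=
      (memLp_const |p - q|).add (hfst.sub hsnd).norm
    exact (h1.integrable_mul h2).const_mul _
  rw [fRW_eq_integral_rwIntegrand, fRW_eq_integral_rwIntegrand]
  calc _ ≤ ∫ z, Ck * (1 + ‖gU 0‖ + L) * ((1 + ‖z.1‖) * (|p - q| + ‖z.1 - z.2‖)) ∂γ :=
        abs_integral_sub_integral_le_of_map hγ.1 hγ.2
          (integrable_rwIntegrand θ hμ hk hkd hkc hkdc hLip p)
          (integrable_rwIntegrand θ hν hk hkd hkc hkdc hLip q)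
          hB
          (abs_rwIntegrand_sub_le θ hk' hk'' hk hkd hkdd hLip p q)
    _ ≤ Ck * (1 + ‖gU 0‖ + L) * ((1 + √(m2 μ)) * (|p - q| + √(∫ z, ‖z.1 - z.2‖ ^ 2 ∂γ))) := by
        rw [integral_const_mul, ← hm2]
        exact mul_le_mul_of_nonneg_left (integral_one_add_mul_const_add_le (abs_nonneg _)
          (fun _ => norm_nonneg _) (fun _ => norm_nonneg _) hfst.norm (hfst.sub hsnd).norm) hK

lemma abs_gRW_sub_le {γ : Measure (E d × E d)} (hγ : IsCoupling γ μ ν) [IsProbabilityMeasure μ]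
    [IsProbabilityMeasure ν] (hμ : MemLp (fun x => x) 2 μ) (hν : MemLp (fun x => x) 2 ν)
    (hk' : ∀ p, HasDerivAt k (kd p) p) (hk : ∀ p, |k p| ≤ Ck) (hkd : ∀ p, |kd p| ≤ Ck)
    (p q : ℝ) :
    |gRW k ε θ p μ - gRW k ε θ q ν| ≤ Ck * (|p - q| + √(∫ z, ‖z.1 - z.2‖ ^ 2 ∂γ)) := by
  have := hγ.isProbabilityMeasure
  have hCk : 0 ≤ Ck := (abs_nonneg _).trans (hk 0)
  have hkc : Continuous k := continuous_iff_continuousAt.2 fun x => (hk' x).continuousAt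
  have hint : ∀ (r : ℝ) (ρ : Measure (E d)) [IsProbabilityMeasure ρ],
      Integrable (fun x => k (r - inner ℝ x (θ : E d))) ρ := fun r ρ _ =>
    Integrable.of_bound (by fun_prop) Ck (.of_forall fun _ => hk _)
  have hdiff : MemLp (fun z : E d × E d => ‖z.1 - z.2‖) 2 γ :=
    ((memLp_comp_fst_of_map_fst hγ.1 hμ).sub (memLp_comp_snd_of_map_snd hγ.2 hν)).norm
  calc |gRW k ε θ p μ - gRW k ε θ q ν|
      = |∫ x, k (p - inner ℝ x (θ : E d)) ∂μ - ∫ y, k (q - inner ℝ y (θ : E d)) ∂ν| := by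
        rw [gRW, gRW, add_sub_add_right_eq_sub]
    _ ≤ ∫ z, Ck * (|p - q| + ‖z.1 - z.2‖) ∂γ :=
        abs_integral_sub_integral_le_of_map hγ.1 hγ.2 (hint p μ) (hint q ν)
          (((integrable_const _).add (hdiff.integrable one_le_two)).const_mul _)
          (abs_comp_sub_inner_sub_le θ hk' hkd p q)
    _ ≤ Ck * (|p - q| + √(∫ z, ‖z.1 - z.2‖ ^ 2 ∂γ)) := by
        rw [integral_const_mul]
        exact mul_le_mul_of_nonneg_left
          (integral_const_add_le _ (fun _ => norm_nonneg _) hdiff) hCk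

lemma le_gRW (hk : ∀ p, 0 ≤ k p) (p : ℝ) : ε ≤ gRW k ε θ p μ :=
  le_add_of_nonneg_left (integral_nonneg fun _ => hk _)

end Velocity

lemma abs_velocity_sub_le_of_coupling {d : ℕ} {k kd kdd : ℝ → ℝ} {Ck ε : ℝ} {gU : E d → E d}
    {L : ℝ≥0} {μ ν : Measure (E d)} {γ : Measure (E d × E d)} (hγ : IsCoupling γ μ ν)
    [IsProbabilityMeasure μ] [IsProbabilityMeasure ν] (hμ : MemLp (fun x => x) 2 μ)
    (hν : MemLp (fun x => x) 2 ν) (hk_nonneg : ∀ p, 0 ≤ k p)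
    (hk' : ∀ p, HasDerivAt k (kd p) p) (hk'' : ∀ p, HasDerivAt kd (kdd p) p)
    (hk : ∀ p, |k p| ≤ Ck) (hkd : ∀ p, |kd p| ≤ Ck) (hkdd : ∀ p, |kdd p| ≤ Ck)
    (hLip : LipschitzWith L gU) (hε : 0 < ε) (θ : sphere (0 : E d) 1) (p q : ℝ) :
    |fRW k kd gU θ p μ / gRW k ε θ p μ - fRW k kd gU θ q ν / gRW k ε θ q ν| ≤
      (Ck * (1 + ‖gU 0‖ + L) / ε + Ck * (1 + ‖gU 0‖ + L) * Ck / ε ^ 2) * (1 + √(m2 μ)) *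
        (|p - q| + √(∫ z, ‖z.1 - z.2‖ ^ 2 ∂γ)) := by
  have hCk : 0 ≤ Ck := (abs_nonneg _).trans (hk 0)
  calc _ ≤ |fRW k kd gU θ p μ - fRW k kd gU θ q ν| / ε +
        |fRW k kd gU θ p μ| * |gRW k ε θ p μ - gRW k ε θ q ν| / ε ^ 2 :=
        abs_div_sub_div_le hε (le_gRW θ hk_nonneg p) (le_gRW θ hk_nonneg q)
    _ ≤ Ck * (1 + ‖gU 0‖ + L) * ((1 + √(m2 μ)) * (|p - q| + √(∫ z, ‖z.1 - z.2‖ ^ 2 ∂γ))) / ε +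
        Ck * (1 + ‖gU 0‖ + L) * (1 + √(m2 μ)) *
          (Ck * (|p - q| + √(∫ z, ‖z.1 - z.2‖ ^ 2 ∂γ))) / ε ^ 2 := by
        gcongr
        · exact abs_fRW_sub_le θ hγ hμ hν hk' hk'' hk hkd hkdd hLip p q
        · exact abs_fRW_le θ hμ hk hkd hLip p
        · exact abs_gRW_sub_le θ hγ hμ hν hk' hk hkd p q
    _ = _ := by ring

theorem velocity_lipschitz_general {d : ℕ} (k kd kdd : ℝ → ℝ) (Ck : ℝ)
    (hk_pos : ∀ p, 0 < k p)
    (hk' : ∀ p, HasDerivAt k (kd p) p) (hk'' : ∀ p, HasDerivAt kd (kdd p) p)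
    (hk_bdd : ∀ p, |k p| ≤ Ck) (hkd_bdd : ∀ p, |kd p| ≤ Ck) (hkdd_bdd : ∀ p, |kdd p| ≤ Ck)
    (gU : E d → E d) (L : ℝ≥0)
    (hLip : LipschitzWith L gU)
    (ε : ℝ) (hε : 0 < ε) :
    ∃ M : ℝ, 0 < M ∧ ∀ (θ : sphere (0 : E d) 1) (p q : ℝ) (μ ν : Measure (E d)),
      IsProbabilityMeasure μ → IsProbabilityMeasure ν →
      Integrable (fun x => ‖x‖ ^ 2) μ → Integrable (fun x => ‖x‖ ^ 2) ν →
      |fRW k kd gU θ p μ / gRW k ε θ p μ - fRW k kd gU θ q ν / gRW k ε θ q ν| ≤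
        M * (1 + Real.sqrt (m2 μ)) * (|p - q| + W2 μ ν) := by
  have hCk : 0 < Ck := (hk_pos 0).trans_le ((le_abs_self _).trans (hk_bdd 0))
  set K := Ck * (1 + ‖gU 0‖ + L)
  refine ⟨K / ε + K * Ck / ε ^ 2, by positivity, fun θ p q μ ν _ _ hμ2 hν2 => ?_⟩
  have hμ : MemLp (fun x => x) 2 μ := (memLp_two_iff_integrable_sq_norm (by fun_prop)).2 hμ2
  have hν : MemLp (fun x => x) 2 ν := (memLp_two_iff_integrable_sq_norm (by fun_prop)).2 hν2
  exact le_mul_add_W2_of_forall_coupling (by positivity) fun γ hγ =>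
    abs_velocity_sub_le_of_coupling hγ hμ hν (fun p => (hk_pos p).le) hk' hk'' hk_bdd hkd_bdd
      hkdd_bdd hLip hε θ p q

/-- Local Lipschitz estimate for the kernel-density Radon–Wasserstein velocity field. -/
theorem velocity_lipschitz {d : ℕ} (k kd kdd : ℝ → ℝ) (Ck : ℝ)
    (hk_pos : ∀ p, 0 < k p)
    (hk' : ∀ p, HasDerivAt k (kd p) p) (hk'' : ∀ p, HasDerivAt kd (kdd p) p)
    (hk_bdd : ∀ p, |k p| ≤ Ck) (hkd_bdd : ∀ p, |kd p| ≤ Ck) (hkdd_bdd : ∀ p, |kdd p| ≤ Ck)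
    (U : E d → ℝ) (gU : E d → E d) (L : ℝ≥0)
    (hU : ∀ x, HasGradientAt U (gU x) x) (hLip : LipschitzWith L gU)
    (ε : ℝ) (hε : 0 < ε) :
    ∃ M : ℝ, 0 < M ∧ ∀ (θ : sphere (0 : E d) 1) (p q : ℝ) (μ ν : Measure (E d)),
      IsProbabilityMeasure μ → IsProbabilityMeasure ν →
      Integrable (fun x => ‖x‖ ^ 2) μ → Integrable (fun x => ‖x‖ ^ 2) ν →
      |fRW k kd gU θ p μ / gRW k ε θ p μ - fRW k kd gU θ q ν / gRW k ε θ q ν| ≤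
        M * (1 + Real.sqrt (m2 μ)) * (|p - q| + W2 μ ν) :=
  velocity_lipschitz_general k kd kdd Ck hk_pos hk' hk'' hk_bdd hkd_bdd hkdd_bdd gU L hLip ε hε
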